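/- Let H be an RKHS on Ω with kernel κ, f ∈ H a target, and P_{f̄} ∈ H an interpolant of a function f̄ (in Lagrange form P_{f̄}(y) = Σ_j f̄(x_j) φ_j(y) with cardinal functions φ_j ∈ H) whose RKHS norm equals f̄_X^T K^{-1} f̄_X where f̄_X = (f̄(x_1),...,f̄(x_n)) and K is the (invertible) Gram matrix. Then for all x ∈ Ω: |f(x) − P_f(x)| ≤ (‖f‖_H + ‖P_{f̄}‖_H) · ‖κ(·,x)‖_H + (max_j |f(x_j) − f̄(x_j)|) · Σ_j |φ_j(x)|, where P_f(y) = Σ_j f(x_j) φ_j(y). -/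

import Mathlib

/-! Since `P_f - P_{f̄} = Σ_j (f(x_j) - f̄(x_j)) φ_j`, the error splits as
`(f - P_{f̄})(x) - Σ_j (f(x_j) - f̄(x_j)) φ_j(x)`. The first term is `⟪f - P_{f̄}, κ(·,x)⟫` by the
reproducing property, bounded by Cauchy–Schwarz; the second is bounded by the largest data
perturbation times the Lebesgue function. -/

open scoped RealInnerProductSpace

theorem abs_inner_sub_inner_le {H : Type*} [NormedAddCommGroup H] [InnerProductSpace ℝ H]
    (g h v : H) : |⟪g, v⟫ - ⟪h, v⟫| ≤ (‖g‖ + ‖h‖) * ‖v‖ :=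
  calc |⟪g, v⟫ - ⟪h, v⟫| = |⟪g - h, v⟫| := by rw [inner_sub_left]
    _ ≤ ‖g - h‖ * ‖v‖ := abs_real_inner_le_norm _ _
    _ ≤ (‖g‖ + ‖h‖) * ‖v‖ := by gcongr; exact norm_sub_le _ _

theorem Finset.abs_sum_mul_le_sup'_mul_sum_abs {ι : Type*} (s : Finset ι) (hs : s.Nonempty)
    (a c : ι → ℝ) : |∑ j ∈ s, a j * c j| ≤ s.sup' hs (fun j => |a j|) * ∑ j ∈ s, |c j| :=
  calc |∑ j ∈ s, a j * c j| ≤ ∑ j ∈ s, |a j| * |c j| := by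
        simpa only [abs_mul] using Finset.abs_sum_le_sum_abs (fun j => a j * c j) s
    _ ≤ ∑ j ∈ s, s.sup' hs (fun j => |a j|) * |c j| := by
        gcongr with j hj
        exact Finset.le_sup' (fun j => |a j|) hj
    _ = s.sup' hs (fun j => |a j|) * ∑ j ∈ s, |c j| := by rw [Finset.mul_sum]

theorem rkhs_corollary_error_bound_general
    {Ω H : Type*} [NormedAddCommGroup H] [InnerProductSpace ℝ H]
    (ev : H → Ω → ℝ) (k : Ω → H)
    (hrep : ∀ (g : H) (x : Ω), ⟪g, k x⟫ = ev g x)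
    {n : ℕ} (hn : 0 < n) (x : Fin n → Ω) (φ : Fin n → H)
    (f Pfbar : H) (fbar : Ω → ℝ)
    (hPfbar : ∀ y : Ω, ev Pfbar y = ∑ j, fbar (x j) * ev (φ j) y)
    (pt : Ω) :
    |ev f pt - ∑ j, ev f (x j) * ev (φ j) pt| ≤
      (‖f‖ + ‖Pfbar‖) * ‖k pt‖ +
      (Finset.univ.sup' (Finset.univ_nonempty_iff.mpr ⟨⟨0, hn⟩⟩)
        (fun j => |ev f (x j) - fbar (x j)|)) * ∑ j, |ev (φ j) pt| := by
  have hsplit : ev f pt - ∑ j, ev f (x j) * ev (φ j) pt =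
      (ev f pt - ev Pfbar pt) - ∑ j, (ev f (x j) - fbar (x j)) * ev (φ j) pt := by
    simp only [hPfbar, sub_mul, Finset.sum_sub_distrib]
    ring
  calc |ev f pt - ∑ j, ev f (x j) * ev (φ j) pt|
      ≤ |ev f pt - ev Pfbar pt| + |∑ j, (ev f (x j) - fbar (x j)) * ev (φ j) pt| := by
        rw [hsplit]; exact abs_sub _ _
    _ ≤ _ := by
        gcongr
        · rw [← hrep, ← hrep]; exact abs_inner_sub_inner_le _ _ _
        · exact Finset.abs_sum_mul_le_sup'_mul_sum_abs _ _ _ _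

/-- Corollary combining the Cauchy–Schwarz/native-space bound
with the Lebesgue-function decomposition:
`|f(x) − P_f(x)| ≤ (‖f‖ + ‖P_f̄‖)‖κ(·,x)‖ + (max_j |f(x_j) − f̄(x_j)|) λ(x)`. -/
theorem rkhs_corollary_error_bound
    {Ω H : Type*} [NormedAddCommGroup H] [InnerProductSpace ℝ H]
    (ev : H → Ω → ℝ) (k : Ω → H)
    (hrep : ∀ (g : H) (x : Ω), ⟪g, k x⟫ = ev g x)
    {n : ℕ} (hn : 0 < n) (x : Fin n → Ω) (φ : Fin n → H)
    (K : Matrix (Fin n) (Fin n) ℝ) (hK : K.PosDef) (hKinv : IsUnit K)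
    (f Pfbar : H) (fbar : Ω → ℝ)
    (hPfbar : ∀ y : Ω, ev Pfbar y = ∑ j, fbar (x j) * ev (φ j) y)
    (hnorm : ‖Pfbar‖ ^ 2 =
      (fun j => fbar (x j)) ⬝ᵥ K⁻¹.mulVec (fun j => fbar (x j)))
    (pt : Ω) :
    |ev f pt - ∑ j, ev f (x j) * ev (φ j) pt| ≤
      (‖f‖ + ‖Pfbar‖) * ‖k pt‖ +
      (Finset.univ.sup' (Finset.univ_nonempty_iff.mpr ⟨⟨0, hn⟩⟩)
        (fun j => |ev f (x j) - fbar (x j)|)) * ∑ j, |ev (φ j) pt| :=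
  rkhs_corollary_error_bound_general ev k hrep hn x φ f Pfbar fbar hPfbar pt
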